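/- arXiv:0903.5147 — 2 statements merged into one kernel-verified Lean document; each statement's English description precedes it below -/
import Mathlib

section
/- Let X be an L-dimensional standard Gaussian random vector shifted by mean vector μ, i.e., X = μ + Z with Z ~ N(0, I_L). For the blockwise James–Stein estimator \hat{θ}(λ)(x) = (1 − λ/‖x‖²)_+ x with λ ≥ 0, Stein's identity gives E‖\hat{θ}(λ)(X) − μ‖² = E[ L + ((λ² − 2λ(L−2))/‖X‖²)·1{‖X‖² > λ} + (‖X‖² − 2L)·1{‖X‖² ≤ λ} ]. -/
/-!
Write the estimator as `x + g x` with `g x = -(λ / max λ ‖x‖²) • x`, so that with `x = μ + z`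
the loss is `∑ i, (z i + g_i)²`. Stein's identity `E[t F t] = E[F' t]` for a standard Gaussian
`t`, applied in each coordinate (by Fubini) to `F = t + 2 g_i`, which is continuous and
differentiable off the sphere `‖x‖² = λ`, turns the risk into `E[L + ‖g‖² + 2 div g]`. On either
side of the sphere `‖g‖² + 2 div g` is explicit, and `L + ‖g‖² + 2 div g` is the SURE integrand.
-/

open MeasureTheory ProbabilityTheory Filter Topology

theorem integral_eq_zero_of_hasDerivAt_off_countable_of_tendsto_cocompact {E : Type*}
    [NormedAddCommGroup E] [NormedSpace ℝ E] [CompleteSpace E] {f f' : ℝ → E} {s : Set ℝ}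
    (hs : s.Countable) (hf : Continuous f) (hderiv : ∀ x ∉ s, HasDerivAt f (f' x) x)
    (hf' : Integrable f') (hlim : Tendsto f (cocompact ℝ) (𝓝 0)) :
    ∫ x, f' x = 0 := by
  have hsym : Tendsto (fun R => f R - f (-R)) atTop (𝓝 (0 - 0)) :=
    (hlim.mono_left atTop_le_cocompact).sub
      ((hlim.mono_left atBot_le_cocompact).comp tendsto_neg_atTop_atBot)
  rw [sub_zero] at hsym
  refine tendsto_nhds_unique (intervalIntegral_tendsto_integral hf' tendsto_neg_atTop_atBot
    tendsto_id) (hsym.congr fun R => ?_)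
  exact (integral_eq_of_hasDerivAt_off_countable f f' hs hf.continuousOn
    (fun x hx => hderiv x hx.2) hf'.intervalIntegrable).symm

theorem hasDerivAt_gaussianPDFReal (μ : ℝ) (v : NNReal) (x : ℝ) :
    HasDerivAt (gaussianPDFReal μ v) (-((x - μ) / v) * gaussianPDFReal μ v x) x := by
  have h := ((((hasDerivAt_id' x).sub_const μ).fun_pow 2).fun_neg.div_const
    (2 * (v : ℝ))).exp.const_mul (√(2 * Real.pi * v))⁻¹
  refine h.congr_deriv ?_
  simp only [gaussianPDFReal]
  ring

theorem tendsto_one_add_abs_mul_gaussianPDFReal_cocompact :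
    Tendsto (fun t => (1 + |t|) * gaussianPDFReal 0 1 t) (cocompact ℝ) (𝓝 0) := by
  have h0 := tendsto_rpow_abs_mul_exp_neg_mul_sq_cocompact (by norm_num : (0:ℝ) < 1 / 2) 0
  have h1 := tendsto_rpow_abs_mul_exp_neg_mul_sq_cocompact (by norm_num : (0:ℝ) < 1 / 2) 1
  have := ((h0.add h1).const_mul (√(2 * Real.pi))⁻¹)
  rw [add_zero, mul_zero] at this
  refine this.congr fun t => ?_
  simp only [gaussianPDFReal, Real.rpow_zero, Real.rpow_one, NNReal.coe_one, mul_one, sub_zero]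
  ring_nf

theorem MeasureTheory.Integrable.gaussianPDFReal_smul {E : Type*} [NormedAddCommGroup E]
    [NormedSpace ℝ E] {μ : ℝ} {v : NNReal} {f : ℝ → E} (hf : Integrable f (gaussianReal μ v)) :
    Integrable (fun x => gaussianPDFReal μ v x • f x) := by
  rcases eq_or_ne v 0 with rfl | hv
  · simp
  rw [gaussianReal_of_var_ne_zero _ hv, integrable_withDensity_iff_integrable_smul'
    (measurable_gaussianPDF _ _) (ae_of_all _ fun _ => gaussianPDF_lt_top)] at hf
  simpa only [toReal_gaussianPDF] using hf

theorem integrable_const_add_mul_sq_gaussianReal (μ : ℝ) (v : NNReal) (a b : ℝ) :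
    Integrable (fun t => a + b * t ^ 2) (gaussianReal μ v) :=
  (integrable_const a).add ((memLp_id_gaussianReal 2).integrable_sq.const_mul b)

theorem integral_mul_sub_deriv_gaussianReal_eq_zero {F F' : ℝ → ℝ} {s : Set ℝ}
    (hs : s.Countable) (hF : Continuous F) (hderiv : ∀ t ∉ s, HasDerivAt F (F' t) t)
    (hF' : AEStronglyMeasurable F') {C : ℝ} (hFC : ∀ t, |F t| ≤ C * (1 + |t|))
    (hF'C : ∀ t, |F' t| ≤ C) :
    ∫ t, (t * F t - F' t) ∂gaussianReal 0 1 = 0 := by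
  have hint : Integrable (fun t => t * F t - F' t) (gaussianReal 0 1) := by
    refine (integrable_const_add_mul_sq_gaussianReal 0 1 (2 * C) (2 * C)).mono'
      ((continuous_id.mul hF).aestronglyMeasurable.sub
        (hF'.mono_ac (gaussianReal_absolutelyContinuous 0 one_ne_zero)))
      (ae_of_all _ fun t => ?_)
    have h1 := hFC t
    have h2 := hF'C t
    have h3 : |t * F t| ≤ |t| * (C * (1 + |t|)) := by
      rw [abs_mul]; exact mul_le_mul_of_nonneg_left h1 (abs_nonneg t)
    rw [Real.norm_eq_abs]
    nlinarith [abs_sub (t * F t) (F' t), sq_abs t, abs_nonneg t, sq_nonneg (|t| - 1),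
      le_trans (abs_nonneg _) h2]
  have hG : ∀ t ∉ s, HasDerivAt (fun t => F t * gaussianPDFReal 0 1 t)
      (-(gaussianPDFReal 0 1 t • (t * F t - F' t))) t := fun t ht => by
    refine ((hderiv t ht).mul (hasDerivAt_gaussianPDFReal 0 1 t)).congr_deriv ?_
    simp only [smul_eq_mul, NNReal.coe_one, sub_zero, div_one]
    ring
  have hlim : Tendsto (fun t => F t * gaussianPDFReal 0 1 t) (cocompact ℝ) (𝓝 0) := by
    have := tendsto_one_add_abs_mul_gaussianPDFReal_cocompact.const_mul C
    rw [mul_zero] at this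
    refine squeeze_zero_norm (fun t => ?_) this
    rw [Real.norm_eq_abs, abs_mul, abs_of_nonneg (gaussianPDFReal_nonneg 0 1 t), ← mul_assoc]
    exact mul_le_mul_of_nonneg_right (hFC t) (gaussianPDFReal_nonneg 0 1 t)
  rw [integral_gaussianReal_eq_integral_smul one_ne_zero, ← neg_eq_zero, ← integral_neg]
  exact integral_eq_zero_of_hasDerivAt_off_countable_of_tendsto_cocompact hs
    (hF.mul (continuous_iff_continuousAt.2 fun t =>
      (hasDerivAt_gaussianPDFReal 0 1 t).continuousAt)) hG hint.gaussianPDFReal_smul.neg hlim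

theorem integral_pi_eq_integral_integral_insertNth {E : Type*} [NormedAddCommGroup E]
    [NormedSpace ℝ E] {n : ℕ} {X : Fin (n + 1) → Type*} [∀ i, MeasurableSpace (X i)]
    {μ : ∀ i, Measure (X i)} [∀ i, SigmaFinite (μ i)] (i : Fin (n + 1))
    {f : (∀ j, X j) → E} (hf : Integrable f (Measure.pi μ)) :
    ∫ x, f x ∂Measure.pi μ =
      ∫ y, ∫ t, f (i.insertNth t y) ∂μ i ∂Measure.pi fun j => μ (i.succAbove j) := by
  have e := (measurePreserving_piFinSuccAbove μ i).symm
  rw [← e.integral_comp']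
  exact integral_prod_symm _
    ((e.integrable_comp_emb (MeasurableEquiv.piFinSuccAbove X i).symm.measurableEmbedding).2 hf)

/-- The single denominator `max lam S` covers both regimes (shrink by `lam / S` when `lam < S`,
kill `x` otherwise) and keeps the map continuous. -/
noncomputable def jamesSteinCorrection (lam S x : ℝ) : ℝ :=
  -(lam * x) / max lam S

/-- `∂/∂x` of `jamesSteinCorrection lam (x ^ 2 + c) x` off the sphere `x ^ 2 + c = lam`. -/
noncomputable def jamesSteinCorrectionDeriv (lam S x : ℝ) : ℝ :=
  if lam < S then 2 * lam * x ^ 2 / S ^ 2 - lam / S else -1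

/-- The Stein discrepancy `z F z - F' z` of `F = z + 2 g` in one coordinate. -/
noncomputable def jamesSteinDiscrepancy (lam S x z : ℝ) : ℝ :=
  z * (z + 2 * jamesSteinCorrection lam S x) - (1 + 2 * jamesSteinCorrectionDeriv lam S x)

noncomputable def jamesSteinSURE (L : ℕ) (lam S : ℝ) : ℝ :=
  (L : ℝ) + (if lam < S then (lam ^ 2 - 2 * lam * ((L : ℝ) - 2)) / S else 0) +
    (if S ≤ lam then S - 2 * (L : ℝ) else 0)

section Scalar

variable {lam S x : ℝ}

theorem sq_jamesSteinCorrection_le (hlam : 0 ≤ lam) (hx : x ^ 2 ≤ S) :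
    jamesSteinCorrection lam S x ^ 2 ≤ lam := by
  have hM : x ^ 2 ≤ max lam S := hx.trans (le_max_right _ _)
  rcases (le_max_left lam S).trans' hlam |>.eq_or_lt with h0 | hpos
  · simp [jamesSteinCorrection, ← h0, hlam]
  rw [jamesSteinCorrection, div_pow, div_le_iff₀ (by positivity)]
  nlinarith [le_max_left lam S, mul_le_mul (le_max_left lam S) hM (sq_nonneg x) hpos.le]

theorem abs_jamesSteinCorrectionDeriv_le_one (hlam : 0 ≤ lam) (hx : x ^ 2 ≤ S) :
    |jamesSteinCorrectionDeriv lam S x| ≤ 1 := by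
  unfold jamesSteinCorrectionDeriv
  split_ifs with h
  · have hS : 0 < S := hlam.trans_lt h
    have h1 : 2 * lam * x ^ 2 / S ^ 2 ≤ 2 * (lam / S) := by
      rw [div_le_iff₀ (by positivity)]
      field_simp
      nlinarith
    have h2 : lam / S ≤ 1 := (div_le_one hS).2 h.le
    have h3 : 0 ≤ 2 * lam * x ^ 2 / S ^ 2 := by positivity
    have h4 : 0 ≤ lam / S := div_nonneg hlam hS.le
    exact abs_le.2 ⟨by linarith, by linarith⟩
  · simp

theorem max_one_sub_div_mul_eq_add_jamesSteinCorrection (hlam : 0 ≤ lam) (hx : x ^ 2 ≤ S) :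
    max (1 - lam / S) 0 * x = x + jamesSteinCorrection lam S x := by
  unfold jamesSteinCorrection
  rcases lt_or_ge lam S with h | h
  · have hS : 0 < S := hlam.trans_lt h
    rw [max_eq_left ((sub_nonneg.2 ((div_le_one hS).2 h.le))), max_eq_right h.le]
    field_simp
    ring
  · rw [max_eq_left h]
    rcases hlam.eq_or_lt with rfl | hpos
    · have : x = 0 := by nlinarith
      simp [this]
    · rcases (le_trans (sq_nonneg x) hx).eq_or_lt with hS | hS
      · have : x = 0 := by nlinarith
        simp [this]
      · rw [max_eq_right (sub_nonpos.2 ((one_le_div hS).2 h))]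
        field_simp
        ring

theorem continuous_jamesSteinCorrection (hlam : 0 ≤ lam) {S x : ℝ → ℝ} (hS : Continuous S)
    (hx : Continuous x) : Continuous fun t => jamesSteinCorrection lam (S t) (x t) := by
  rcases hlam.eq_or_lt with rfl | hpos
  · simpa [jamesSteinCorrection] using continuous_const
  exact (continuous_const.mul hx).neg.div (continuous_const.max hS)
    fun t => (hpos.trans_le (le_max_left _ _)).ne'

theorem hasDerivAt_jamesSteinCorrection {c : ℝ} (hlam : 0 ≤ lam) (hc : 0 ≤ c)
    (hne : x ^ 2 + c ≠ lam) :
    HasDerivAt (fun y => jamesSteinCorrection lam (y ^ 2 + c) y)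
      (jamesSteinCorrectionDeriv lam (x ^ 2 + c) x) x := by
  have hS : Continuous fun y : ℝ => y ^ 2 + c := by fun_prop
  unfold jamesSteinCorrection jamesSteinCorrectionDeriv
  rcases hne.symm.lt_or_gt with h | h
  · have hS0 : x ^ 2 + c ≠ 0 := (hlam.trans_lt h).ne'
    have hev : (fun y => -(lam * y) / max lam (y ^ 2 + c)) =ᶠ[𝓝 x]
        fun y => -(lam * y) / (y ^ 2 + c) := by
      filter_upwards [(isOpen_lt continuous_const hS).mem_nhds h] with y hy
      rw [max_eq_right hy.le]
    rw [if_pos h]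
    refine (((hasDerivAt_id' x).const_mul lam).fun_neg.div
      (((hasDerivAt_id' x).fun_pow 2).add_const c) hS0).congr_of_eventuallyEq hev |>.congr_deriv ?_
    field_simp
    ring
  · have hpos : 0 < lam := (add_nonneg (sq_nonneg x) hc).trans_lt h
    have hev : (fun y => -(lam * y) / max lam (y ^ 2 + c)) =ᶠ[𝓝 x] fun y => -y := by
      filter_upwards [(isOpen_lt hS continuous_const).mem_nhds h] with y hy
      rw [max_eq_left hy.le]
      field_simp
    rw [if_neg h.not_gt]
    exact (hasDerivAt_id' x).fun_neg.congr_of_eventuallyEq hev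

theorem abs_jamesSteinDiscrepancy_le (hlam : 0 ≤ lam) (hx : x ^ 2 ≤ S) (z : ℝ) :
    |jamesSteinDiscrepancy lam S x z| ≤ 3 + lam + 2 * z ^ 2 := by
  have hg := Real.abs_le_sqrt (sq_jamesSteinCorrection_le hlam hx)
  have hh := abs_le.1 (abs_jamesSteinCorrectionDeriv_le_one hlam hx)
  have hzg : |z * jamesSteinCorrection lam S x| ≤ |z| * √lam := by
    rw [abs_mul]; exact mul_le_mul_of_nonneg_left hg (abs_nonneg z)
  have hsq : 2 * (|z| * √lam) ≤ z ^ 2 + lam := by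
    nlinarith [sq_nonneg (|z| - √lam), Real.sq_sqrt hlam, sq_abs z]
  unfold jamesSteinDiscrepancy
  rw [abs_le]
  constructor <;> nlinarith [abs_le.1 hzg, sq_nonneg z]

theorem abs_jamesSteinSURE_le (L : ℕ) (hlam : 0 ≤ lam) (hS : 0 ≤ S) :
    |jamesSteinSURE L lam S| ≤ L + |lam - 2 * ((L : ℝ) - 2)| + (lam + 2 * L) := by
  have hL : (0 : ℝ) ≤ L := L.cast_nonneg
  unfold jamesSteinSURE
  rcases lt_or_ge lam S with h | h
  · have hS : 0 < S := hlam.trans_lt h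
    have hq : |(lam ^ 2 - 2 * lam * ((L : ℝ) - 2)) / S| ≤ |lam - 2 * ((L : ℝ) - 2)| := by
      rw [show (lam ^ 2 - 2 * lam * ((L : ℝ) - 2)) / S = lam / S * (lam - 2 * ((L : ℝ) - 2)) by
        ring, abs_mul, abs_of_nonneg (div_nonneg hlam hS.le)]
      exact mul_le_of_le_one_left (abs_nonneg _) ((div_le_one hS).2 h.le)
    rw [if_pos h, if_neg h.not_ge, add_zero]
    refine (abs_add_le _ _).trans ?_
    rw [abs_of_nonneg hL]
    linarith
  · rw [if_neg h.not_gt, if_pos h, add_zero]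
    refine (abs_add_le _ _).trans ?_
    have hB : |S - 2 * (L : ℝ)| ≤ lam + 2 * L := abs_le.2 ⟨by linarith, by linarith⟩
    rw [abs_of_nonneg hL]
    linarith [abs_nonneg (lam - 2 * ((L : ℝ) - 2))]

end Scalar

theorem finite_setOf_add_sq_add_eq (a c d : ℝ) : {t : ℝ | (a + t) ^ 2 + c = d}.Finite := by
  refine (Set.toFinite {√(d - c) - a, -√(d - c) - a}).subset fun t ht => ?_
  have h : √(d - c) = |a + t| := by
    rw [← Real.sqrt_sq_eq_abs, ← (eq_sub_iff_add_eq.2 ht)]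
  rcases abs_cases (a + t) with ⟨h', _⟩ | ⟨h', _⟩ <;> simp only [Set.mem_insert_iff,
    Set.mem_singleton_iff, h, h'] <;> [left; right] <;> ring

theorem measurable_jamesSteinSURE (L : ℕ) (lam : ℝ) : Measurable (jamesSteinSURE L lam) := by
  have hlt : MeasurableSet {S : ℝ | lam < S} := measurableSet_lt measurable_const measurable_id
  have hle : MeasurableSet {S : ℝ | S ≤ lam} := measurableSet_le measurable_id measurable_const
  exact (measurable_const.add (Measurable.ite hlt (measurable_const.div measurable_id)
    measurable_const)).add (Measurable.ite hle (measurable_id.sub_const _) measurable_const)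

theorem measurable_jamesSteinDiscrepancy {α : Type*} [MeasurableSpace α] {S x z : α → ℝ}
    (lam : ℝ) (hS : Measurable S) (hx : Measurable x) (hz : Measurable z) :
    Measurable fun a => jamesSteinDiscrepancy lam (S a) (x a) (z a) := by
  have hg : Measurable fun a => jamesSteinCorrection lam (S a) (x a) := by
    unfold jamesSteinCorrection; fun_prop
  have hh : Measurable fun a => jamesSteinCorrectionDeriv lam (S a) (x a) :=
    Measurable.ite (measurableSet_lt measurable_const hS) (by fun_prop) measurable_const
  unfold jamesSteinDiscrepancy
  fun_prop

theorem integral_jamesSteinDiscrepancy_gaussianReal {lam c : ℝ} (hlam : 0 ≤ lam) (hc : 0 ≤ c)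
    (a : ℝ) :
    ∫ t, jamesSteinDiscrepancy lam ((a + t) ^ 2 + c) (a + t) t ∂gaussianReal 0 1 = 0 := by
  have hx : ∀ t, (a + t) ^ 2 ≤ (a + t) ^ 2 + c := fun t => le_add_of_nonneg_right hc
  refine integral_mul_sub_deriv_gaussianReal_eq_zero (C := 3 + 2 * √lam)
    (finite_setOf_add_sq_add_eq a c lam).countable
    (continuous_id.add (continuous_const.mul
      (continuous_jamesSteinCorrection hlam (by fun_prop) (by fun_prop))))
    (fun t ht => (hasDerivAt_id t).add
      (((hasDerivAt_jamesSteinCorrection hlam hc ht).comp_const_add a t).const_mul 2))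
    (Measurable.ite (measurableSet_lt measurable_const (by fun_prop)) (by fun_prop)
      measurable_const |>.const_mul 2 |>.const_add 1).aestronglyMeasurable
    (fun t => ?_) (fun t => ?_)
  · have hg := Real.abs_le_sqrt (sq_jamesSteinCorrection_le hlam (hx t))
    refine (abs_add_le _ _).trans ?_
    rw [abs_mul, abs_two]
    nlinarith [abs_nonneg t, Real.sqrt_nonneg lam]
  · have hh := abs_jamesSteinCorrectionDeriv_le_one hlam (hx t)
    refine (abs_add_le _ _).trans ?_
    rw [abs_mul, abs_two, abs_one]
    linarith [Real.sqrt_nonneg lam]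

section Pi

variable {ι : Type*} [Fintype ι] {lam : ℝ}

theorem sq_le_sum_sq (x : ι → ℝ) (i : ι) : x i ^ 2 ≤ ∑ j, x j ^ 2 :=
  Finset.single_le_sum (f := fun j => x j ^ 2) (fun j _ => sq_nonneg (x j)) (Finset.mem_univ i)

theorem sum_sq_jamesSteinCorrection_add_two_mul_sum_deriv (hlam : 0 ≤ lam) (x : ι → ℝ) :
    ∑ i, jamesSteinCorrection lam (∑ j, x j ^ 2) (x i) ^ 2 +
        2 * ∑ i, jamesSteinCorrectionDeriv lam (∑ j, x j ^ 2) (x i) =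
      jamesSteinSURE (Fintype.card ι) lam (∑ j, x j ^ 2) - Fintype.card ι := by
  set S := ∑ j, x j ^ 2 with hS
  unfold jamesSteinCorrection jamesSteinCorrectionDeriv jamesSteinSURE
  rcases lt_or_ge lam S with h | h
  · have hS0 : S ≠ 0 := (hlam.trans_lt h).ne'
    simp only [max_eq_right h.le, if_pos h, if_neg h.not_ge, div_pow, neg_sq, mul_pow,
      ← Finset.sum_div, ← Finset.mul_sum, Finset.sum_sub_distrib, Finset.sum_const,
      Finset.card_univ, nsmul_eq_mul, ← hS]
    field_simp
    ring
  · simp only [max_eq_left h, if_neg h.not_gt, if_pos h, Finset.sum_const, Finset.card_univ,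
      nsmul_eq_mul]
    rcases hlam.eq_or_lt with rfl | hpos
    · have : S = 0 := le_antisymm h (Finset.sum_nonneg fun j _ => sq_nonneg _)
      simp [this]
    · simp only [neg_div, mul_div_cancel_left₀ _ hpos.ne', neg_sq, ← hS]
      ring

theorem jamesStein_loss_eq_SURE_add_sum_discrepancy (hlam : 0 ≤ lam) (μ z : ι → ℝ) :
    ∑ i, (max (1 - lam / ∑ j, (μ j + z j) ^ 2) 0 * (μ i + z i) - μ i) ^ 2 =
      jamesSteinSURE (Fintype.card ι) lam (∑ j, (μ j + z j) ^ 2) +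
        ∑ i, jamesSteinDiscrepancy lam (∑ j, (μ j + z j) ^ 2) (μ i + z i) (z i) := by
  have hSURE := sum_sq_jamesSteinCorrection_add_two_mul_sum_deriv hlam fun j => μ j + z j
  rw [eq_sub_iff_add_eq] at hSURE
  rw [← hSURE, Fintype.card_eq_sum_ones, Nat.cast_sum, Nat.cast_one, Finset.mul_sum,
    ← Finset.sum_add_distrib, ← Finset.sum_add_distrib, ← Finset.sum_add_distrib]
  refine Finset.sum_congr rfl fun i _ => ?_
  rw [max_one_sub_div_mul_eq_add_jamesSteinCorrection hlam (sq_le_sum_sq (fun j => μ j + z j) i)]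
  unfold jamesSteinDiscrepancy
  ring

theorem integrable_jamesSteinDiscrepancy (hlam : 0 ≤ lam) (μ : ι → ℝ) (i : ι) :
    Integrable (fun z => jamesSteinDiscrepancy lam (∑ j, (μ j + z j) ^ 2) (μ i + z i) (z i))
      (Measure.pi fun _ => gaussianReal 0 1) :=
  (integrable_comp_eval (integrable_const_add_mul_sq_gaussianReal 0 1 (3 + lam) 2)).mono'
    (measurable_jamesSteinDiscrepancy lam (by fun_prop) (by fun_prop)
      (by fun_prop)).aestronglyMeasurable
    (ae_of_all _ fun z => abs_jamesSteinDiscrepancy_le hlam (sq_le_sum_sq _ i) (z i))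

end Pi

theorem integral_jamesSteinDiscrepancy {L : ℕ} {lam : ℝ} (hlam : 0 ≤ lam) (μ : Fin L → ℝ)
    (i : Fin L) :
    ∫ z, jamesSteinDiscrepancy lam (∑ j, (μ j + z j) ^ 2) (μ i + z i) (z i)
      ∂Measure.pi (fun _ => gaussianReal 0 1) = 0 := by
  obtain ⟨n, rfl⟩ : ∃ n, L = n + 1 := Nat.exists_eq_add_one_of_ne_zero i.pos.ne'
  rw [integral_pi_eq_integral_integral_insertNth i (integrable_jamesSteinDiscrepancy hlam μ i)]
  refine integral_eq_zero_of_ae (ae_of_all _ fun w => ?_)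
  simp only [Fin.sum_univ_succAbove _ i, Fin.insertNth_apply_same, Fin.insertNth_apply_succAbove]
  exact integral_jamesSteinDiscrepancy_gaussianReal hlam
    (Finset.sum_nonneg fun j _ => sq_nonneg _) (μ i)

theorem sure_unbiased_blockwise_james_stein_general (L : ℕ) (μ : Fin L → ℝ)
    (lam : ℝ) (hlam : 0 ≤ lam) :
    (∫ z : Fin L → ℝ,
        (∑ i, ((max (1 - lam / (∑ j, (μ j + z j) ^ 2)) 0) * (μ i + z i) - μ i) ^ 2)
        ∂(Measure.pi fun _ : Fin L => gaussianReal 0 1)) =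
      ∫ z : Fin L → ℝ,
        ((L : ℝ) +
          (if lam < ∑ j, (μ j + z j) ^ 2 then
            (lam ^ 2 - 2 * lam * ((L : ℝ) - 2)) / (∑ j, (μ j + z j) ^ 2) else 0) +
          (if (∑ j, (μ j + z j) ^ 2) ≤ lam then (∑ j, (μ j + z j) ^ 2) - 2 * (L : ℝ) else 0))
        ∂(Measure.pi fun _ : Fin L => gaussianReal 0 1) := by
  have hΦ := fun i (_ : i ∈ Finset.univ) => integrable_jamesSteinDiscrepancy hlam μ i
  have hSURE : Integrable (fun z : Fin L → ℝ => jamesSteinSURE L lam (∑ j, (μ j + z j) ^ 2))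
      (Measure.pi fun _ => gaussianReal 0 1) :=
    .of_bound ((measurable_jamesSteinSURE L lam).comp (by fun_prop)).aestronglyMeasurable _
      (ae_of_all _ fun z => abs_jamesSteinSURE_le L hlam (by positivity))
  simp_rw [jamesStein_loss_eq_SURE_add_sum_discrepancy hlam μ, Fintype.card_fin]
  rw [integral_add hSURE (integrable_finsetSum _ hΦ), integral_finsetSum _ hΦ]
  simp only [integral_jamesSteinDiscrepancy hlam, Finset.sum_const_zero, add_zero]
  rfl

/-- Stein's identity for the blockwise James–Stein estimator: with `X = μ + Z`,
`Z ~ N(0, I_L)`, `λ ≥ 0`,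
`E‖θ̂(λ)(X) − μ‖² = E[L + (λ² − 2λ(L−2))/‖X‖² · 1{‖X‖² > λ} + (‖X‖² − 2L) · 1{‖X‖² ≤ λ}]`. -/
theorem sure_unbiased_blockwise_james_stein (L : ℕ) (hL : 1 ≤ L) (μ : Fin L → ℝ)
    (lam : ℝ) (hlam : 0 ≤ lam) :
    (∫ z : Fin L → ℝ,
        (∑ i, ((max (1 - lam / (∑ j, (μ j + z j) ^ 2)) 0) * (μ i + z i) - μ i) ^ 2)
        ∂(Measure.pi fun _ : Fin L => gaussianReal 0 1)) =
      ∫ z : Fin L → ℝ,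
        ((L : ℝ) +
          (if lam < ∑ j, (μ j + z j) ^ 2 then
            (lam ^ 2 - 2 * lam * ((L : ℝ) - 2)) / (∑ j, (μ j + z j) ^ 2) else 0) +
          (if (∑ j, (μ j + z j) ^ 2) ≤ lam then (∑ j, (μ j + z j) ^ 2) - 2 * (L : ℝ) else 0))
        ∂(Measure.pi fun _ : Fin L => gaussianReal 0 1) :=
  sure_unbiased_blockwise_james_stein_general L μ lam hlam
end

section
/- Let x_1,…,x_d be real numbers and for fixed block size L ≥ 2 define SURE(λ) = ∑_{b=1}^m [ L + ((λ² − 2λ(L−2))/S_b²)·1{S_b² > λ} + (S_b² − 2L)·1{S_b² ≤ λ} ], where S_b² are the block squared norms. Then on each interval between consecutive values of {S_b² : S_b² ≥ L−2} ∪ {L−2}, SURE(λ) restricted to λ ≥ L−2 is minimized at an endpoint belonging to the finite set A = {S_b² : S_b² ≥ L−2} ∪ {L−2}; hence the minimizer of SURE over λ ≥ L−2 lies in A. -/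
/-- For fixed block size `L ≥ 2`, the minimizer of `SURE(λ)` over `λ ≥ L − 2` lies in the
finite set `A = {S_b² : S_b² ≥ L − 2} ∪ {L − 2}`. -/
theorem sure_minimizer_in_finite_set (m L : ℕ) (hL : 2 ≤ L) (x : Fin m → Fin L → ℝ) :
    ∃ lam₀ ∈ {s : ℝ | (∃ b, s = ∑ i, (x b i) ^ 2 ∧ (L : ℝ) - 2 ≤ s)} ∪ {(L : ℝ) - 2},
      ∀ lam : ℝ, (L : ℝ) - 2 ≤ lam →
        (∑ b, ((L : ℝ) +
          (if lam₀ < ∑ i, (x b i) ^ 2 then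
            (lam₀ ^ 2 - 2 * lam₀ * ((L : ℝ) - 2)) / (∑ i, (x b i) ^ 2) else 0) +
          (if (∑ i, (x b i) ^ 2) ≤ lam₀ then (∑ i, (x b i) ^ 2) - 2 * (L : ℝ) else 0))) ≤
        ∑ b, ((L : ℝ) +
          (if lam < ∑ i, (x b i) ^ 2 then
            (lam ^ 2 - 2 * lam * ((L : ℝ) - 2)) / (∑ i, (x b i) ^ 2) else 0) +
          (if (∑ i, (x b i) ^ 2) ≤ lam then (∑ i, (x b i) ^ 2) - 2 * (L : ℝ) else 0)) := by
  classical
  set c : ℝ := (L : ℝ) - 2 with hc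
  have hc0 : (0 : ℝ) ≤ c := by
    have : (2 : ℝ) ≤ (L : ℝ) := by exact_mod_cast hL
    simp [hc]; linarith
  set S : Fin m → ℝ := fun b => ∑ i, (x b i) ^ 2 with hSdef
  set F : ℝ → ℝ := fun lam => ∑ b, ((L : ℝ) +
      (if lam < S b then (lam ^ 2 - 2 * lam * c) / (S b) else 0) +
      (if S b ≤ lam then S b - 2 * (L : ℝ) else 0)) with hF
  set A : Finset ℝ := insert c ((Finset.univ.image S).filter (fun s => c ≤ s)) with hA
  have hAne : A.Nonempty := ⟨c, Finset.mem_insert_self _ _⟩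
  obtain ⟨lam₀, hlam₀A, hmin⟩ := Finset.exists_min_image A F hAne
  have hAmem : ∀ s ∈ A, c ≤ s := by
    intro s hs
    rcases Finset.mem_insert.mp hs with h | h
    · exact h ▸ le_refl c
    · exact (Finset.mem_filter.mp h).2
  refine ⟨lam₀, ?_, ?_⟩
  · rcases Finset.mem_insert.mp hlam₀A with h | h
    · right; exact h
    · left
      obtain ⟨hmem, hle⟩ := Finset.mem_filter.mp h
      obtain ⟨b, _, hb⟩ := Finset.mem_image.mp hmem
      exact ⟨b, hb.symm, hle⟩
  · intro lam hlam
    set B := A.filter (fun s => s ≤ lam) with hB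
    have hBne : B.Nonempty := ⟨c, Finset.mem_filter.mpr ⟨Finset.mem_insert_self _ _, hlam⟩⟩
    set a := B.max' hBne with ha
    have haB : a ∈ B := B.max'_mem hBne
    have haA : a ∈ A := (Finset.mem_filter.mp haB).1
    have halam : a ≤ lam := (Finset.mem_filter.mp haB).2
    have hca : c ≤ a := hAmem a haA
    have h1 : F lam₀ ≤ F a := hmin a haA
    have h2 : F a ≤ F lam := by
      apply Finset.sum_le_sum
      intro b _
      by_cases hSa : S b ≤ a
      · have hSlam : S b ≤ lam := hSa.trans halam
        rw [if_neg (not_lt.mpr hSa), if_pos hSa, if_neg (not_lt.mpr hSlam), if_pos hSlam]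
      · push_neg at hSa
        have hSmem : S b ∈ A := by
          apply Finset.mem_insert_of_mem
          exact Finset.mem_filter.mpr ⟨Finset.mem_image_of_mem _ (Finset.mem_univ b),
            le_of_lt (lt_of_le_of_lt hca hSa)⟩
        have hlamS : lam < S b := by
          by_contra h
          push_neg at h
          have hmemB : S b ∈ B := Finset.mem_filter.mpr ⟨hSmem, h⟩
          exact absurd (Finset.le_max' B _ hmemB) (not_le.mpr hSa)
        have hSpos : 0 < S b := lt_of_le_of_lt (hc0.trans hca) hSa
        rw [if_pos hSa, if_neg (not_le.mpr hSa), if_pos hlamS, if_neg (not_le.mpr hlamS)]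
        have hnum : a ^ 2 - 2 * a * c ≤ lam ^ 2 - 2 * lam * c := by nlinarith
        have hdiv : (a ^ 2 - 2 * a * c) / S b ≤ (lam ^ 2 - 2 * lam * c) / S b :=
          (div_le_div_iff_of_pos_right hSpos).mpr hnum
        linarith
    exact h1.trans h2
end
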